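/- Let d be a positive integer and let ℓ₁,…,ℓ_d be a sequence of even positive integers with product V = ℓ₁⋯ℓ_d. Then the radius of the flip graph G(ℓ₁,…,ℓ_d) is at least (1/4 − (1/2^(d+1))·C(d−1, ⌊(d−1)/2⌋))·V, where C(·,·) denotes the binomial coefficient; that is, for every self-complementary ideal C of [ℓ₁]×⋯×[ℓ_d] there exists a self-complementary ideal I with 2^(d+1)·dist(C, I) ≥ (2^(d−1) − C(d−1, ⌊(d−1)/2⌋))·V. -/

import Mathlib

open Finset

/-- An ideal (downward-closed subset, possibly empty) of a finite poset. -/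
def IsIdeal {P : Type*} [PartialOrder P] (I : Finset P) : Prop :=
  ∀ a ∈ I, ∀ b, b ≤ a → b ∈ I

/-- A self-complementary ideal with respect to an involution `φ`. -/
def IsSCIdeal {P : Type*} [PartialOrder P] (φ : P → P) (I : Finset P) : Prop :=
  IsIdeal I ∧ ∀ a, a ∈ I ↔ φ a ∉ I

/-- The flip graph on self-complementary ideals: two ideals are adjacent when they
differ in exactly one element each way. -/
def FlipGraph {P : Type*} [PartialOrder P] [DecidableEq P] (φ : P → P) :
    SimpleGraph {I : Finset P // IsSCIdeal φ I} where
  Adj I J := I ≠ J ∧ (I.1 \ J.1).card = 1 ∧ (J.1 \ I.1).card = 1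
  symm := ⟨fun _ _ h => ⟨h.1.symm, h.2.2, h.2.1⟩⟩
  loopless := ⟨fun _ h => h.1 rfl⟩

/-- Eccentricity of a vertex: its maximum distance to any vertex. -/
noncomputable def eccentricity {V : Type*} (G : SimpleGraph V) (v : V) : ℕ :=
  ⨆ u, G.dist v u

/-- Diameter of a graph: the maximum eccentricity. -/
noncomputable def graphDiam {V : Type*} (G : SimpleGraph V) : ℕ :=
  ⨆ v, eccentricity G v

/-- Radius of a graph: the minimum eccentricity. -/
noncomputable def graphRadius {V : Type*} (G : SimpleGraph V) : ℕ :=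
  ⨅ v, eccentricity G v

/-- The order-reversing involution `aᵢ ↦ ℓᵢ + 1 - aᵢ` on a product of chains
(0-indexed via `Fin.rev`). -/
def chainRev {d : ℕ} (ℓ : Fin d → ℕ) (a : ∀ i, Fin (ℓ i)) : ∀ i, Fin (ℓ i) :=
  fun i => (a i).rev

/-!
Each edge of the flip graph moves one element, so `dist C D ≥ #(C \ D)`; the graph is connected
because flipping a maximal element `a` of `C \ D` to `φ a` stays self-complementary and brings `C`
closer to `D`. Take for `D` the half-ideals `H_j = {a | a_j < ℓ_j / 2}`. Double counting gives
`∑_j #(C \ H_j) = ∑_{a ∈ C} #S(a)`, where `S(a)` is the set of coordinates of `a` in the upper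
half. As `C` contains exactly one of `a`, `φ a` and `#S(φ a) = d - #S(a)`, this is at least half of
`∑_a min(#S(a), d - #S(a)) = (V / 2^d) ∑_k C(d,k) min(k, d-k)`, which equals
`(V / 2^d) d (2^(d-1) - C(d-1, ⌊(d-1)/2⌋))` by telescoping `C(d,k) (2k - d)`. The farthest `H_j`
is at least as far as the average.
-/

section SelfComplementary

variable {P : Type*} {φ : P → P}

lemma IsSCIdeal.apply_mem_iff [PartialOrder P] {C : Finset P} (hC : IsSCIdeal φ C) {a : P} :
    φ a ∈ C ↔ a ∉ C := by
  rw [hC.2 a, not_not]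

lemma IsSCIdeal.eq_of_subset [PartialOrder P] {C D : Finset P} (hC : IsSCIdeal φ C)
    (hD : IsSCIdeal φ D) (h : C ⊆ D) : C = D := by
  refine h.antisymm fun a haD => by_contra fun haC => ?_
  exact (hD.2 a).1 haD (h (hC.apply_mem_iff.2 haC))

lemma sum_add_sum_comp_eq_sum [Fintype P] [DecidableEq P] {M : Type*} [AddCommMonoid M]
    (hφ : Function.Involutive φ) {C : Finset P} (hC : ∀ a, a ∈ C ↔ φ a ∉ C) (g : P → M) :
    ∑ a ∈ C, g a + ∑ a ∈ C, g (φ a) = ∑ a, g a := by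
  have himage : C.image φ = Cᶜ := by
    ext b
    rw [mem_image, mem_compl, hC b, not_not]
    exact ⟨fun ⟨a, ha, hab⟩ => hab ▸ (hφ a).symm ▸ ha, fun hb => ⟨φ b, hb, hφ b⟩⟩
  rw [← sum_image fun a _ b _ h => hφ.injective h, himage, sum_add_sum_compl]

variable [PartialOrder P] [DecidableEq P]

lemma IsSCIdeal.flip (hφ : Function.Involutive φ) (hanti : Antitone φ) {C : Finset P}
    (hC : IsSCIdeal φ C) {a : P} (hmax : Maximal (· ∈ C) a) (hnle : ¬ a ≤ φ a) :
    IsSCIdeal φ (insert (φ a) (C.erase a)) := by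
  have haC : a ∈ C := hmax.prop
  have hφaC : φ a ∉ C := (hC.2 a).1 haC
  refine ⟨fun x hx y hyx => ?_, fun x => ?_⟩
  · simp only [mem_insert, mem_erase] at hx ⊢
    rcases hx with rfl | ⟨hxa, hxC⟩
    · refine or_iff_not_imp_left.2 fun hy => ⟨fun hya => hnle (hya ▸ hyx), by_contra fun hyC => ?_⟩
      have hay : a ≤ φ y := hφ a ▸ hanti hyx
      exact hy (hφ.eq_iff.1 (hmax.eq_of_le (hC.apply_mem_iff.2 hyC) hay).symm)
    · exact Or.inr ⟨fun hya => hxa (hmax.eq_of_le hxC (hya ▸ hyx)).symm, hC.1 x hxC y hyx⟩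
  · have hne : a ≠ φ a := fun h => hnle h.le
    simp only [mem_insert, mem_erase, ne_eq, hφ.injective.eq_iff, hφ.eq_iff, hC.apply_mem_iff]
    grind

end SelfComplementary

namespace FlipGraph

variable {P : Type*} [PartialOrder P] [DecidableEq P] {φ : P → P}

/-- Flipping a maximal element `a` of `C \ D` to `φ a` moves `C` one step towards `D`. -/
lemma exists_adj_card_sdiff_lt (hφ : Function.Involutive φ) (hanti : Antitone φ)
    {C D : {I : Finset P // IsSCIdeal φ I}} (hCD : C ≠ D) :
    ∃ C', (FlipGraph φ).Adj C C' ∧ #(C'.1 \ D.1) < #(C.1 \ D.1) := by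
  have hne : (C.1 \ D.1).Nonempty := by
    rw [nonempty_iff_ne_empty, Ne, sdiff_eq_empty_iff_subset]
    exact fun h => hCD (Subtype.ext (C.2.eq_of_subset D.2 h))
  obtain ⟨a, hmax⟩ := Finset.exists_maximal hne
  obtain ⟨haC, haD⟩ := mem_sdiff.1 hmax.prop
  have hnle : ¬ a ≤ φ a := fun h => haD (D.2.1 _ (D.2.apply_mem_iff.2 haD) a h)
  have hmaxC : Maximal (· ∈ C.1) a :=
    ⟨haC, fun c hc hac => hmax.2 (mem_sdiff.2 ⟨hc, fun hcD => haD (D.2.1 c hcD a hac)⟩) hac⟩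
  have hφaC : φ a ∉ C.1 := (C.2.2 a).1 haC
  have hφa : φ a ≠ a := fun h => hnle h.ge
  have hφaD : φ a ∈ D.1 := D.2.apply_mem_iff.2 haD
  have hsdiff : insert (φ a) (C.1.erase a) \ D.1 = (C.1 \ D.1).erase a := by
    ext x; simp only [mem_sdiff, mem_insert, mem_erase]; grind
  refine ⟨⟨_, C.2.flip hφ hanti hmaxC hnle⟩, ⟨fun h => ?_, card_eq_one.2 ⟨a, ?_⟩,
    card_eq_one.2 ⟨φ a, ?_⟩⟩, ?_⟩
  · rw [h] at haC
    simp [hφa.symm] at haC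
  · ext x; simp only [mem_sdiff, mem_insert, mem_erase, mem_singleton]; grind
  · ext x; simp only [mem_sdiff, mem_insert, mem_erase, mem_singleton]; grind
  · exact hsdiff ▸ card_erase_lt_of_mem hmax.prop

lemma reachable (hφ : Function.Involutive φ) (hanti : Antitone φ)
    (C D : {I : Finset P // IsSCIdeal φ I}) : (FlipGraph φ).Reachable C D := by
  induction hn : #(C.1 \ D.1) using Nat.strong_induction_on generalizing C with
  | _ n ih =>
    by_cases hCD : C = D
    · exact hCD ▸ .refl _
    obtain ⟨C', hadj, hlt⟩ := exists_adj_card_sdiff_lt hφ hanti hCD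
    exact hadj.reachable.trans (ih _ (hn ▸ hlt) C' rfl)

lemma card_sdiff_le_length {C D : {I : Finset P // IsSCIdeal φ I}}
    (w : (FlipGraph φ).Walk C D) : #(C.1 \ D.1) ≤ w.length := by
  induction w with
  | nil => simp
  | @cons u v x hadj p ih =>
    calc #(u.1 \ x.1) ≤ #(u.1 \ v.1 ∪ v.1 \ x.1) := card_le_card (sdiff_triangle _ _ _)
      _ ≤ #(u.1 \ v.1) + #(v.1 \ x.1) := card_union_le _ _
      _ ≤ (p.cons hadj).length := by rw [hadj.2.1, SimpleGraph.Walk.length_cons]; omega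

lemma card_sdiff_le_dist (hφ : Function.Involutive φ) (hanti : Antitone φ)
    (C D : {I : Finset P // IsSCIdeal φ I}) : #(C.1 \ D.1) ≤ (FlipGraph φ).dist C D := by
  obtain ⟨w, hw⟩ := (reachable hφ hanti C D).exists_walk_length_eq_dist
  exact hw ▸ card_sdiff_le_length w

end FlipGraph

section ChainProduct

variable {d : ℕ} {ℓ : Fin d → ℕ}

lemma chainRev_involutive : Function.Involutive (chainRev ℓ) :=
  fun a => funext fun i => Fin.rev_rev (a i)

lemma chainRev_antitone : Antitone (chainRev ℓ) :=
  fun _ _ h i => Fin.rev_le_rev.2 (h i)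

variable (ℓ) in
def halfIdeal (j : Fin d) : Finset (∀ i, Fin (ℓ i)) :=
  {a | (a j : ℕ) < ℓ j / 2}

variable (ℓ) in
def upperCoords (a : ∀ i, Fin (ℓ i)) : Finset (Fin d) :=
  {j | ℓ j / 2 ≤ (a j : ℕ)}

lemma isSCIdeal_halfIdeal {j : Fin d} (heven : Even (ℓ j)) :
    IsSCIdeal (chainRev ℓ) (halfIdeal ℓ j) := by
  refine ⟨fun a ha b hba => ?_, fun a => ?_⟩
  · simp only [halfIdeal, mem_filter, mem_univ, true_and] at ha ⊢
    exact lt_of_le_of_lt (α := ℕ) (hba j) ha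
  · simp only [halfIdeal, mem_filter, mem_univ, true_and, chainRev, Fin.val_rev, not_lt]
    have := (a j).isLt
    obtain ⟨t, ht⟩ := heven
    omega

lemma upperCoords_chainRev (heven : ∀ i, Even (ℓ i)) (a : ∀ i, Fin (ℓ i)) :
    upperCoords ℓ (chainRev ℓ a) = (upperCoords ℓ a)ᶜ := by
  ext j
  simp only [upperCoords, mem_compl, mem_filter, mem_univ, true_and, not_le]
  simp only [chainRev, Fin.val_rev]
  have := (a j).isLt
  obtain ⟨t, ht⟩ := heven j
  omega

lemma sum_card_sdiff_halfIdeal (C : Finset (∀ i, Fin (ℓ i))) :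
    ∑ j, #(C \ halfIdeal ℓ j) = ∑ a ∈ C, #(upperCoords ℓ a) := by
  have h := sum_card_bipartiteAbove_eq_sum_card_bipartiteBelow (s := C) (t := univ)
    (r := fun a j => ℓ j / 2 ≤ (a j : ℕ))
  convert h.symm using 3 <;> ext <;> simp [halfIdeal, upperCoords]

lemma card_filter_half_iff {n : ℕ} (heven : Even n) (p : Prop) [Decidable p] :
    #{x : Fin n | p ↔ n / 2 ≤ (x : ℕ)} = n / 2 := by
  have hlt : #{x : Fin n | (x : ℕ) < n / 2} = n / 2 := by
    rw [Fin.card_filter_val_lt]; omega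
  by_cases hp : p
  · have := card_filter_add_card_filter_not (s := univ) fun x : Fin n => (x : ℕ) < n / 2
    simp only [hlt, card_univ, Fintype.card_fin, not_lt] at this
    simp only [hp, true_iff]
    obtain ⟨t, ht⟩ := heven
    omega
  · simpa [hp] using hlt

lemma card_upperCoords_fiber (heven : ∀ i, Even (ℓ i)) (s : Finset (Fin d)) :
    #{a | upperCoords ℓ a = s} = ∏ i, ℓ i / 2 := by
  have hfiber : ({a | upperCoords ℓ a = s} : Finset (∀ i, Fin (ℓ i))) =
      Fintype.piFinset fun i => {x : Fin (ℓ i) | i ∈ s ↔ ℓ i / 2 ≤ (x : ℕ)} := by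
    ext a
    simp [Finset.ext_iff, upperCoords, iff_comm]
  rw [hfiber, Fintype.card_piFinset]
  exact prod_congr rfl fun i _ => card_filter_half_iff (heven i) _

lemma sum_comp_card_upperCoords (heven : ∀ i, Even (ℓ i)) (f : ℕ → ℕ) :
    ∑ a, f #(upperCoords ℓ a) = (∏ i, ℓ i / 2) * ∑ k ∈ range (d + 1), d.choose k * f k := by
  rw [← sum_fiberwise' univ (upperCoords ℓ) fun s => f #s]
  simp only [sum_const, card_upperCoords_fiber heven, smul_eq_mul, ← mul_sum]
  rw [← powerset_univ, sum_powerset_apply_card, card_univ, Fintype.card_fin]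
  simp only [smul_eq_mul]

end ChainProduct

lemma sum_range_choose_mul_two_mul_sub (d n : ℕ) :
    ∑ k ∈ range (n + 1), (d.choose k : ℤ) * (2 * k - d) = -(d * (d - 1).choose n) := by
  induction n with
  | zero => simp
  | succ n ih =>
    rw [sum_range_succ, ih]
    rcases d with _ | e
    · simp
    rw [Nat.choose_succ_succ', add_tsub_cancel_right]
    rcases le_or_gt n e with hn | hn
    · have h := Nat.choose_succ_right_eq e n
      zify [hn] at h
      push_cast
      linear_combination 2 * h
    · simp [Nat.choose_eq_zero_of_lt hn, Nat.choose_eq_zero_of_lt (hn.trans n.lt_succ_self)]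

lemma sum_range_choose_mul_min_add (d : ℕ) :
    ∑ k ∈ range (d + 1), d.choose k * min k (d - k) + d * (d - 1).choose ((d - 1) / 2) =
      d * 2 ^ (d - 1) := by
  have hm : d / 2 + 1 ≤ d + 1 := by omega
  have hlow : ∀ k ∈ range (d / 2 + 1), d.choose k * min k (d - k) = d.choose k * k := by
    intro k hk
    rw [mem_range] at hk
    rw [min_eq_left (by omega)]
  have hhigh : ∀ k ∈ Ico (d / 2 + 1) (d + 1), (d.choose k : ℤ) * min (k : ℤ) ↑(d - k) =
      d.choose k * k - d.choose k * (2 * k - d) := by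
    intro k hk
    rw [mem_Ico] at hk
    push_cast [show k ≤ d by omega]
    rw [min_eq_right (by omega)]
    ring
  have hsymm : (d - 1).choose (d / 2) = (d - 1).choose ((d - 1) / 2) :=
    Nat.choose_symm_of_eq_add (by omega)
  have hvanish : d * (d - 1).choose d = 0 := by
    rcases d with _ | e
    · rfl
    · simp
  have hall := sum_range_choose_mul_two_mul_sub d d
  have hhalf := sum_range_choose_mul_two_mul_sub d (d / 2)
  rw [← sum_range_add_sum_Ico _ hm] at hall
  rw [← Nat.sum_range_mul_choose, ← sum_range_add_sum_Ico _ hm, ← sum_range_add_sum_Ico _ hm,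
    sum_congr rfl hlow, ← hsymm]
  zify at hvanish ⊢
  rw [sum_congr rfl hhigh, sum_sub_distrib]
  simp only [mul_comm _ ((d.choose _ : ℕ) : ℤ)]
  linarith

lemma IsSCIdeal.le_two_mul_sum_card_upperCoords {d : ℕ} {ℓ : Fin d → ℕ}
    (heven : ∀ i, Even (ℓ i)) {C : Finset (∀ i, Fin (ℓ i))} (hC : IsSCIdeal (chainRev ℓ) C) :
    (∏ i, ℓ i / 2) * ∑ k ∈ range (d + 1), d.choose k * min k (d - k) ≤
      2 * ∑ a ∈ C, #(upperCoords ℓ a) := by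
  let g a := min #(upperCoords ℓ a) (d - #(upperCoords ℓ a))
  have hg : ∀ a, g (chainRev ℓ a) = g a := fun a => by
    have := card_le_univ (upperCoords ℓ a)
    simp only [g, upperCoords_chainRev heven, card_compl, Fintype.card_fin] at this ⊢
    omega
  rw [← sum_comp_card_upperCoords heven, ← sum_add_sum_comp_eq_sum chainRev_involutive hC.2 g]
  simp only [hg, ← two_mul]
  gcongr
  exact min_le_left _ _

lemma prod_eq_two_pow_mul_prod_half {d : ℕ} {ℓ : Fin d → ℕ} (heven : ∀ i, Even (ℓ i)) :
    ∏ i, ℓ i = 2 ^ d * ∏ i, ℓ i / 2 :=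
  calc ∏ i, ℓ i = ∏ i, 2 * (ℓ i / 2) :=
        prod_congr rfl fun i _ => (Nat.two_mul_div_two_of_even (heven i)).symm
    _ = 2 ^ d * ∏ i, ℓ i / 2 := by rw [prod_mul_distrib, prod_const, card_univ, Fintype.card_fin]

lemma IsSCIdeal.exists_le_two_mul_card_sdiff_halfIdeal {d : ℕ} (hd : 0 < d) {ℓ : Fin d → ℕ}
    (heven : ∀ i, Even (ℓ i)) {C : Finset (∀ i, Fin (ℓ i))} (hC : IsSCIdeal (chainRev ℓ) C) :
    ∃ j, (∏ i, ℓ i / 2) * (2 ^ (d - 1) - (d - 1).choose ((d - 1) / 2)) ≤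
      2 * #(C \ halfIdeal ℓ j) := by
  have : Nonempty (Fin d) := ⟨⟨0, hd⟩⟩
  obtain ⟨j, -, hj⟩ := exists_max_image univ (fun j => #(C \ halfIdeal ℓ j)) univ_nonempty
  refine ⟨j, Nat.le_of_mul_le_mul_left ?_ hd⟩
  have hchoose := sum_range_choose_mul_min_add d
  calc d * ((∏ i, ℓ i / 2) * (2 ^ (d - 1) - (d - 1).choose ((d - 1) / 2)))
      = (∏ i, ℓ i / 2) * ∑ k ∈ range (d + 1), d.choose k * min k (d - k) := by
        rw [mul_left_comm, Nat.mul_sub]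
        congr 1
        omega
    _ ≤ 2 * ∑ j, #(C \ halfIdeal ℓ j) := by
        rw [sum_card_sdiff_halfIdeal]; exact hC.le_two_mul_sum_card_upperCoords heven
    _ ≤ 2 * (d * #(C \ halfIdeal ℓ j)) := by
        gcongr; simpa using sum_le_card_nsmul univ _ _ hj
    _ = d * (2 * #(C \ halfIdeal ℓ j)) := mul_left_comm _ _ _

theorem flipGraph_radius_lower_bound_general (d : ℕ) (hd : 0 < d) (ℓ : Fin d → ℕ)
    (heven : ∀ i, Even (ℓ i)) :
    ∀ C : {I : Finset (∀ i, Fin (ℓ i)) // IsSCIdeal (chainRev ℓ) I},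
      ∃ I : {I : Finset (∀ i, Fin (ℓ i)) // IsSCIdeal (chainRev ℓ) I},
        (2 ^ (d - 1) - Nat.choose (d - 1) ((d - 1) / 2)) * ∏ i, ℓ i ≤
          2 ^ (d + 1) * (FlipGraph (chainRev ℓ)).dist C I := by
  intro C
  obtain ⟨j, hj⟩ := C.2.exists_le_two_mul_card_sdiff_halfIdeal hd heven
  let H : {I : Finset (∀ i, Fin (ℓ i)) // IsSCIdeal (chainRev ℓ) I} :=
    ⟨halfIdeal ℓ j, isSCIdeal_halfIdeal (heven j)⟩
  refine ⟨H, ?_⟩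
  calc (2 ^ (d - 1) - (d - 1).choose ((d - 1) / 2)) * ∏ i, ℓ i
      = 2 ^ d * ((∏ i, ℓ i / 2) * (2 ^ (d - 1) - (d - 1).choose ((d - 1) / 2))) := by
        rw [prod_eq_two_pow_mul_prod_half heven]; ring
    _ ≤ 2 ^ d * (2 * #(C.1 \ H.1)) := Nat.mul_le_mul_left _ hj
    _ ≤ 2 ^ d * (2 * (FlipGraph (chainRev ℓ)).dist C H) := by
        gcongr; exact FlipGraph.card_sdiff_le_dist chainRev_involutive chainRev_antitone C H
    _ = 2 ^ (d + 1) * (FlipGraph (chainRev ℓ)).dist C H := by ring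

/-- Radius lower bound for the flip graph on self-complementary ideals of a product of
even-length chains: for every self-complementary ideal `C` there is a self-complementary
ideal `I` with `2^(d+1) · dist(C, I) ≥ (2^(d-1) - C(d-1, ⌊(d-1)/2⌋)) · V`. -/
theorem flipGraph_radius_lower_bound (d : ℕ) (hd : 0 < d) (ℓ : Fin d → ℕ)
    (hpos : ∀ i, 0 < ℓ i) (heven : ∀ i, Even (ℓ i)) :
    ∀ C : {I : Finset (∀ i, Fin (ℓ i)) // IsSCIdeal (chainRev ℓ) I},
      ∃ I : {I : Finset (∀ i, Fin (ℓ i)) // IsSCIdeal (chainRev ℓ) I},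
        (2 ^ (d - 1) - Nat.choose (d - 1) ((d - 1) / 2)) * ∏ i, ℓ i ≤
          2 ^ (d + 1) * (FlipGraph (chainRev ℓ)).dist C I :=
  flipGraph_radius_lower_bound_general d hd ℓ heven
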